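/- Let $I : [T_0, T_1] \to \mathbb{R}$ be bounded, nonnegative, with $I(T_0)=0$, satisfying $I(t) \le I(t_1) + N_1 \int_{t_1}^{t_2} I(s)\,ds + N_2$ for all $T_0 \le t_1 \le t \le t_2 \le T_1$. If $a > 0$ satisfies $a \le 1/(100 N_1)$, then for every $k \ge 0$ with $T_0 + (k+1)a \le T_1$, one has $\sup_{T_0 + ka \le t \le T_0 + (k+1)a} I(t) \le 2 N_2 + 2 I(T_0 + ka)$. -/

import Mathlib

open MeasureTheory Set intervalIntegral

/-
On a window `[c, d]` of length `a`, bound the integral in the hypothesis by `a (B + N₂)`,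
where `B` is the supremum of `I` on the window. Since `N₁ a ≤ 1/100`, this gives
`B ≤ I c + (B + N₂)/100`, and absorbing `B/100` into the left side yields
`B ≤ (100 I c + N₂)/99 ≤ 2 N₂ + 2 I c`.
-/

theorem intervalIntegral.integral_le_of_norm_le_const {f : ℝ → ℝ} {c d C : ℝ}
    (hcd : c ≤ d) (hf : ∀ s ∈ Ioc c d, ‖f s‖ ≤ C) : ∫ s in c..d, f s ≤ C * (d - c) := by
  have h := norm_integral_le_of_norm_le_const (by rwa [uIoc_of_le hcd])
  rw [abs_of_nonneg (sub_nonneg.2 hcd)] at h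
  exact (le_abs_self _).trans h

theorem mul_le_of_le_add_mul_sSup {α : Type*} {s : Set α} {f : α → ℝ}
    (hf : BddAbove (f '' s)) {A ε : ℝ} (hε : ε ≤ 1) (h : ∀ t ∈ s, f t ≤ A + ε * sSup (f '' s)) :
    ∀ t ∈ s, (1 - ε) * f t ≤ A := by
  intro t ht
  have hft : f t ≤ sSup (f '' s) := le_csSup hf (mem_image_of_mem f ht)
  have hsup : sSup (f '' s) ≤ A + ε * sSup (f '' s) :=
    csSup_le (image_nonempty.2 ⟨t, ht⟩) (forall_mem_image.2 h)
  nlinarith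

theorem le_two_mul_add_two_mul_of_le_add_integral {I : ℝ → ℝ} {c d N₁ N₂ : ℝ}
    (hcd : c ≤ d) (hN₁ : 0 ≤ N₁) (hN₂ : 0 ≤ N₂) (hlen : N₁ * (d - c) ≤ 1 / 100)
    (hbdd : BddAbove (I '' Icc c d)) (hnonneg : ∀ t ∈ Icc c d, 0 ≤ I t)
    (hineq : ∀ t ∈ Icc c d, I t ≤ I c + N₁ * ∫ s in c..d, I s + N₂) :
    ∀ t ∈ Icc c d, I t ≤ 2 * N₂ + 2 * I c := by
  set B := sSup (I '' Icc c d)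
  have hint : ∫ s in c..d, I s + N₂ ≤ (B + N₂) * (d - c) := by
    refine integral_le_of_norm_le_const hcd fun s hs ↦ ?_
    have hs' : s ∈ Icc c d := Ioc_subset_Icc_self hs
    rw [Real.norm_of_nonneg (by linarith [hnonneg s hs'])]
    linarith [le_csSup hbdd (mem_image_of_mem I hs')]
  have hc : c ∈ Icc c d := left_mem_Icc.2 hcd
  have hB : 0 ≤ B + N₂ := by linarith [hnonneg c hc, le_csSup hbdd (mem_image_of_mem I hc)]
  have hstep : ∀ t ∈ Icc c d, I t ≤ (I c + N₂ / 100) + 1 / 100 * B := by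
    intro t ht
    calc I t ≤ I c + N₁ * ∫ s in c..d, I s + N₂ := hineq t ht
      _ ≤ I c + N₁ * ((B + N₂) * (d - c)) := by gcongr
      _ ≤ I c + (B + N₂) / 100 := by nlinarith
      _ = _ := by ring
  intro t ht
  have := mul_le_of_le_add_mul_sSup hbdd (by norm_num) hstep t ht
  linarith [hnonneg c hc]

theorem stmt_1_general (N₁ N₂ : ℝ) (hN₂ : 0 ≤ N₂)
    (T₀ T₁ : ℝ) (I : ℝ → ℝ)
    (hbdd : ∃ M : ℝ, ∀ t ∈ Icc T₀ T₁, |I t| ≤ M)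
    (hnonneg : ∀ t ∈ Icc T₀ T₁, 0 ≤ I t)
    (hineq : ∀ t₁ t t₂ : ℝ, T₀ ≤ t₁ → t₁ ≤ t → t ≤ t₂ → t₂ ≤ T₁ →
      I t ≤ I t₁ + N₁ * ∫ s in t₁..t₂, I s + N₂)
    (a : ℝ) (ha : 0 < a) (ha' : a ≤ 1 / (100 * N₁)) (k : ℕ)
    (hk : T₀ + (k + 1) * a ≤ T₁) :
    ∀ t ∈ Icc (T₀ + k * a) (T₀ + (k + 1) * a),
      I t ≤ 2 * N₂ + 2 * I (T₀ + k * a) := by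
  have hcd : T₀ + k * a ≤ T₀ + (k + 1) * a := by linarith
  have hsub : Icc (T₀ + k * a) (T₀ + (k + 1) * a) ⊆ Icc T₀ T₁ :=
    Icc_subset_Icc (by linarith [mul_nonneg k.cast_nonneg ha.le]) hk
  have hN₁ : 0 < N₁ :=
    pos_of_mul_pos_right (one_div_pos.1 (ha.trans_le ha')) (by norm_num)
  have hlen : N₁ * (T₀ + (k + 1) * a - (T₀ + k * a)) ≤ 1 / 100 := by
    rw [le_div_iff₀ (by positivity)] at ha'
    linarith
  obtain ⟨M, hM⟩ := hbdd
  refine le_two_mul_add_two_mul_of_le_add_integral hcd hN₁.le hN₂ hlen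
    ⟨M, forall_mem_image.2 fun t ht ↦ (abs_le.1 (hM t (hsub ht))).2⟩
    (fun t ht ↦ hnonneg t (hsub ht)) fun t ht ↦ ?_
  exact hineq _ t _ (hsub (left_mem_Icc.2 hcd)).1 ht.1 ht.2 hk

/-- Inductive step of the Gronwall-type lemma: on each subinterval of length
`a ≤ 1/(100 N₁)`, one has `sup_{[T₀+ka, T₀+(k+1)a]} I ≤ 2 N₂ + 2 I(T₀ + ka)`. -/
theorem stmt_1 (N₁ N₂ : ℝ) (hN₁ : 0 ≤ N₁) (hN₂ : 0 ≤ N₂)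
    (T₀ T₁ : ℝ) (hT : T₀ < T₁) (I : ℝ → ℝ)
    (hbdd : ∃ M : ℝ, ∀ t ∈ Icc T₀ T₁, |I t| ≤ M)
    (hnonneg : ∀ t ∈ Icc T₀ T₁, 0 ≤ I t)
    (hI0 : I T₀ = 0)
    (hineq : ∀ t₁ t t₂ : ℝ, T₀ ≤ t₁ → t₁ ≤ t → t ≤ t₂ → t₂ ≤ T₁ →
      I t ≤ I t₁ + N₁ * ∫ s in t₁..t₂, I s + N₂)
    (a : ℝ) (ha : 0 < a) (ha' : a ≤ 1 / (100 * N₁)) (k : ℕ)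
    (hk : T₀ + (k + 1) * a ≤ T₁) :
    ∀ t ∈ Icc (T₀ + k * a) (T₀ + (k + 1) * a),
      I t ≤ 2 * N₂ + 2 * I (T₀ + k * a) :=
  stmt_1_general N₁ N₂ hN₂ T₀ T₁ I hbdd hnonneg hineq a ha ha' k hk
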